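/- For each fixed θ ∈ ℝ, (ζ^{(r)}(rθ) + μ^{(r)}·r·θ − (1/2)·(μ^{(r)})³·(σ^{(r)})²·r²·θ²) / r² → 0 as r ↓ 0. -/

import Mathlib

/-!
Put `X = min (T⁽ʳ⁾, 1/r)` and `ψ_r(z) = E[exp (-z X)]`, a decreasing function of `z`; then
`ζ⁽ʳ⁾(rθ)` is the root of `ψ_r(z) = e^{rθ}`. Cutting `T⁽ʳ⁾` at `1/r` moves the first two moments by
`O(r²)` and `O(r)` (third-moment bound), and `|z X| = O(1)` when `z = O(r)`, so a third-order
Taylor bound gives `ψ_r(z) = 1 - z m + z² (σ² + m²) / 2 + O(r³)` for `z = O(r)`. At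
`z = z₀ + c r²`, with `z₀ = -μ r θ + μ³ σ² r² θ² / 2`, this becomes `e^{rθ} - c m r² + O(r³)`.
Hence for every `ε > 0` and small `r`, `ψ_r(z₀ + ε r²) < e^{rθ} < ψ_r(z₀ - ε r²)`, and
monotonicity traps `ζ⁽ʳ⁾(rθ)` within `ε r²` of `z₀`.
-/

open MeasureTheory Filter Topology Asymptotics

lemma Real.abs_exp_sub_quadratic_le (t : ℝ) :
    |Real.exp t - (1 + t + t ^ 2 / 2)| ≤ |t| ^ 3 * Real.exp |t| := by
  have h := Complex.norm_exp_sub_sum_le_norm_mul_exp (t : ℂ) 3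
  simp only [Finset.sum_range_succ, Finset.sum_range_zero, Complex.norm_real,
    Real.norm_eq_abs] at h
  norm_num [Nat.factorial] at h
  rw [← Complex.ofReal_exp] at h
  exact_mod_cast h

lemma pow_le_one_add_pow {t : ℝ} (ht : 0 ≤ t) {n k : ℕ} (hnk : n ≤ k) : t ^ n ≤ 1 + t ^ k := by
  rcases le_total t 1 with h | h
  · linarith [pow_le_one₀ ht h (n := n), pow_nonneg ht k]
  · linarith [pow_le_pow_right₀ h hnk]

lemma sub_min_one_div_le {t r : ℝ} (ht : 0 ≤ t) (hr : 0 < r) :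
    t - min t (1 / r) ≤ r ^ 2 * t ^ 3 := by
  rcases le_total t (1 / r) with h | h
  · rw [min_eq_left h, sub_self]; positivity
  · have hrt : 1 ≤ r * t := by rwa [div_le_iff₀' hr] at h
    rw [min_eq_right h]
    nlinarith [one_div_pos.2 hr, mul_le_mul_of_nonneg_left (one_le_pow₀ hrt (n := 2)) ht]

lemma sq_sub_min_one_div_sq_le {t r : ℝ} (ht : 0 ≤ t) (hr : 0 < r) :
    t ^ 2 - min t (1 / r) ^ 2 ≤ r * t ^ 3 := by
  rcases le_total t (1 / r) with h | h
  · rw [min_eq_left h, sub_self]; positivity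
  · have hrt : 1 ≤ r * t := by rwa [div_le_iff₀' hr] at h
    rw [min_eq_right h]
    nlinarith [sq_nonneg (1 / r), mul_le_mul_of_nonneg_left hrt (sq_nonneg t)]

lemma tendsto_div_of_antitone_of_isLittleO {α : Type*} {l : Filter α} {ψ : α → ℝ → ℝ}
    {ζ z₀ y g h : α → ℝ} {g₀ : ℝ} (hg₀ : 0 < g₀) (hg : Tendsto g l (𝓝 g₀))
    (hh : ∀ᶠ a in l, 0 < h a) (hψ : ∀ᶠ a in l, Antitone (ψ a)) (hζ : ∀ᶠ a in l, ψ a (ζ a) = y a)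
    (hexp : ∀ c, (fun a => ψ a (z₀ a + c * h a) - y a + c * g a * h a) =o[l] h) :
    Tendsto (fun a => (ζ a - z₀ a) / h a) l (𝓝 0) := by
  have hsign : ∀ c ≠ 0, ∀ᶠ a in l, 0 < c * (y a - ψ a (z₀ a + c * h a)) := by
    intro c hc
    filter_upwards [hh, hg.eventually (lt_mem_nhds (half_lt_self hg₀)),
      (hexp c).def (by positivity : 0 < |c| * g₀ / 2)] with a ha hga hD
    rw [Real.norm_eq_abs, Real.norm_eq_abs, abs_of_pos ha] at hD
    set D := ψ a (z₀ a + c * h a) - y a + c * g a * h a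
    have hcD : c * D ≤ c ^ 2 * (g₀ / 2 * h a) := calc
      c * D ≤ |c| * |D| := (le_abs_self _).trans (abs_mul c D).le
      _ ≤ |c| * (|c| * g₀ / 2 * h a) := by gcongr
      _ = c ^ 2 * (g₀ / 2 * h a) := by rw [← sq_abs c]; ring
    have hgh : c ^ 2 * (g₀ / 2 * h a) < c ^ 2 * (g a * h a) := by gcongr
    linarith
  refine tendsto_order.2 ⟨fun b hb => ?_, fun b hb => ?_⟩
  · filter_upwards [hh, hψ, hζ, hsign b hb.ne] with a ha hanti hroot hside
    rw [lt_div_iff₀ ha]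
    by_contra! hle
    have := hanti (show ζ a ≤ z₀ a + b * h a by linarith)
    nlinarith
  · filter_upwards [hh, hψ, hζ, hsign b hb.ne'] with a ha hanti hroot hside
    rw [div_lt_iff₀ ha]
    by_contra! hle
    have := hanti (show z₀ a + b * h a ≤ ζ a by linarith)
    nlinarith

namespace MeasureTheory

variable {Ω : Type*} [MeasurableSpace Ω] {μ : Measure Ω}

lemma Integrable.pow_of_le [IsFiniteMeasure μ] {T : Ω → ℝ} (hT : Measurable T)
    (hT0 : ∀ᵐ ω ∂μ, 0 ≤ T ω) {n k : ℕ} (hnk : n ≤ k) (hk : Integrable (fun ω => T ω ^ k) μ) :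
    Integrable (fun ω => T ω ^ n) μ := by
  refine ((integrable_const 1).add hk).mono' (hT.pow_const n).aestronglyMeasurable ?_
  filter_upwards [hT0] with ω hω
  rw [Real.norm_eq_abs, abs_of_nonneg (pow_nonneg hω n)]
  exact pow_le_one_add_pow hω hnk

lemma integral_sub_integral_le_mul {f g k : Ω → ℝ} (hf : Integrable f μ) (hg : Integrable g μ)
    (hk : Integrable k μ) {c : ℝ} (h : ∀ᵐ ω ∂μ, f ω - g ω ≤ c * k ω) :
    ∫ ω, f ω ∂μ - ∫ ω, g ω ∂μ ≤ c * ∫ ω, k ω ∂μ := by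
  rw [← integral_sub hf hg, ← integral_const_mul]
  exact integral_mono_ae (hf.sub hg) (hk.const_mul c) h

lemma integrable_pow_of_bounded [IsFiniteMeasure μ] {X : Ω → ℝ} (hX : Measurable X) {b : ℝ}
    (hX0 : ∀ᵐ ω ∂μ, 0 ≤ X ω) (hXb : ∀ᵐ ω ∂μ, X ω ≤ b) (n : ℕ) :
    Integrable (fun ω => X ω ^ n) μ := by
  refine .of_bound (hX.pow_const n).aestronglyMeasurable (b ^ n) ?_
  filter_upwards [hX0, hXb] with ω h0 hb
  rw [Real.norm_eq_abs, abs_of_nonneg (pow_nonneg h0 n)]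
  exact pow_le_pow_left₀ h0 hb n

lemma integrable_exp_neg_mul_of_bounded [IsFiniteMeasure μ] {X : Ω → ℝ} (hX : Measurable X)
    {b : ℝ} (hX0 : ∀ᵐ ω ∂μ, 0 ≤ X ω) (hXb : ∀ᵐ ω ∂μ, X ω ≤ b) (z : ℝ) :
    Integrable (fun ω => Real.exp (-z * X ω)) μ := by
  refine .of_bound (hX.const_mul (-z)).exp.aestronglyMeasurable (Real.exp (|z| * b)) ?_
  filter_upwards [hX0, hXb] with ω h0 hb
  rw [Real.norm_eq_abs, Real.abs_exp, Real.exp_le_exp]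
  calc -z * X ω ≤ |z| * X ω := by gcongr; exact neg_le_abs z
    _ ≤ |z| * b := by gcongr

lemma antitone_integral_exp_neg_mul [IsFiniteMeasure μ] {X : Ω → ℝ} (hX : Measurable X)
    {b : ℝ} (hX0 : ∀ᵐ ω ∂μ, 0 ≤ X ω) (hXb : ∀ᵐ ω ∂μ, X ω ≤ b) :
    Antitone fun z => ∫ ω, Real.exp (-z * X ω) ∂μ := by
  intro z z' hzz'
  refine integral_mono_ae (integrable_exp_neg_mul_of_bounded hX hX0 hXb z')
    (integrable_exp_neg_mul_of_bounded hX hX0 hXb z) ?_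
  filter_upwards [hX0] with ω hω
  gcongr

lemma abs_integral_exp_neg_mul_sub_le [IsProbabilityMeasure μ] {X : Ω → ℝ} (hX : Measurable X)
    {b : ℝ} (hX0 : ∀ᵐ ω ∂μ, 0 ≤ X ω) (hXb : ∀ᵐ ω ∂μ, X ω ≤ b) (z : ℝ) :
    |∫ ω, Real.exp (-z * X ω) ∂μ - (1 - z * ∫ ω, X ω ∂μ + z ^ 2 / 2 * ∫ ω, X ω ^ 2 ∂μ)|
      ≤ Real.exp (|z| * b) * |z| ^ 3 * ∫ ω, X ω ^ 3 ∂μ := by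
  have hXn := integrable_pow_of_bounded hX hX0 hXb (μ := μ)
  have hX1 : Integrable X μ := by simpa using hXn 1
  have hlin : Integrable (fun ω => 1 - z * X ω) μ := (integrable_const 1).sub (hX1.const_mul z)
  have hquad : Integrable (fun ω => 1 - z * X ω + z ^ 2 / 2 * X ω ^ 2) μ :=
    hlin.add ((hXn 2).const_mul _)
  have hQ : ∫ ω, (1 - z * X ω + z ^ 2 / 2 * X ω ^ 2) ∂μ
      = 1 - z * ∫ ω, X ω ∂μ + z ^ 2 / 2 * ∫ ω, X ω ^ 2 ∂μ := by
    rw [integral_add hlin ((hXn 2).const_mul _),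
      integral_sub (integrable_const 1) (hX1.const_mul z), integral_const_mul,
      integral_const_mul]
    simp
  rw [← hQ, ← integral_sub (integrable_exp_neg_mul_of_bounded hX hX0 hXb z) hquad,
    ← integral_const_mul]
  refine abs_integral_le_integral_abs.trans (integral_mono_ae
    ((integrable_exp_neg_mul_of_bounded hX hX0 hXb z).sub hquad).abs
    ((hXn 3).const_mul _) ?_)
  filter_upwards [hX0, hXb] with ω h0 hb
  have hzX : |-z * X ω| ≤ |z| * b := by
    rw [abs_mul, abs_neg, abs_of_nonneg h0]; gcongr
  calc |Real.exp (-z * X ω) - (1 - z * X ω + z ^ 2 / 2 * X ω ^ 2)|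
      = |Real.exp (-z * X ω) - (1 + -z * X ω + (-z * X ω) ^ 2 / 2)| := by congr 2; ring
    _ ≤ |-z * X ω| ^ 3 * Real.exp |-z * X ω| := Real.abs_exp_sub_quadratic_le _
    _ ≤ |-z * X ω| ^ 3 * Real.exp (|z| * b) := by gcongr
    _ = Real.exp (|z| * b) * |z| ^ 3 * X ω ^ 3 := by
      rw [abs_mul, abs_neg, abs_of_nonneg h0]; ring

lemma abs_quadratic_integral_min_one_div_sub_le [IsFiniteMeasure μ] {T : Ω → ℝ}
    (hT : Measurable T) (hT0 : ∀ᵐ ω ∂μ, 0 ≤ T ω) (hT3 : Integrable (fun ω => T ω ^ 3) μ)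
    {r : ℝ} (hr : 0 < r) (z : ℝ) :
    |(1 - z * ∫ ω, min (T ω) (1 / r) ∂μ + z ^ 2 / 2 * ∫ ω, min (T ω) (1 / r) ^ 2 ∂μ)
        - (1 - z * ∫ ω, T ω ∂μ + z ^ 2 / 2 * ∫ ω, T ω ^ 2 ∂μ)|
      ≤ (|z| * r ^ 2 + z ^ 2 / 2 * r) * ∫ ω, T ω ^ 3 ∂μ := by
  have hX0 : ∀ᵐ ω ∂μ, 0 ≤ min (T ω) (1 / r) := by
    filter_upwards [hT0] with ω hω using le_min hω (by positivity)
  have hXn := integrable_pow_of_bounded (hT.min measurable_const) hX0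
    (ae_of_all _ fun ω => min_le_right _ (1 / r))
  have hX1 : Integrable (fun ω => min (T ω) (1 / r)) μ := by simpa using hXn 1
  have hT1 : Integrable T μ := by simpa using hT3.pow_of_le hT hT0 (n := 1) (by norm_num)
  have hT2 := hT3.pow_of_le hT hT0 (n := 2) (by norm_num)
  set d₁ := ∫ ω, T ω ∂μ - ∫ ω, min (T ω) (1 / r) ∂μ with hd₁def
  set d₂ := ∫ ω, T ω ^ 2 ∂μ - ∫ ω, min (T ω) (1 / r) ^ 2 ∂μ with hd₂def
  have hd₁ : 0 ≤ d₁ := sub_nonneg.2 <|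
    integral_mono_ae hX1 hT1 (ae_of_all _ fun ω => min_le_left _ _)
  have hd₂ : 0 ≤ d₂ := sub_nonneg.2 <| integral_mono_ae (hXn 2) hT2 <| by
    filter_upwards [hX0] with ω hω using pow_le_pow_left₀ hω (min_le_left _ _) 2
  have hd₁r : d₁ ≤ r ^ 2 * ∫ ω, T ω ^ 3 ∂μ := integral_sub_integral_le_mul hT1 hX1 hT3 <| by
    filter_upwards [hT0] with ω hω using sub_min_one_div_le hω hr
  have hd₂r : d₂ ≤ r * ∫ ω, T ω ^ 3 ∂μ := integral_sub_integral_le_mul hT2 (hXn 2) hT3 <| by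
    filter_upwards [hT0] with ω hω using sq_sub_min_one_div_sq_le hω hr
  calc _ = |z * d₁ - z ^ 2 / 2 * d₂| := by rw [hd₁def, hd₂def]; congr 1; ring
    _ ≤ |z| * d₁ + z ^ 2 / 2 * d₂ := by
      refine (abs_sub _ _).trans_eq ?_
      rw [abs_mul, abs_mul, abs_of_nonneg hd₁, abs_of_nonneg hd₂,
        abs_of_nonneg (by positivity : (0 : ℝ) ≤ z ^ 2 / 2)]
    _ ≤ |z| * (r ^ 2 * ∫ ω, T ω ^ 3 ∂μ) + z ^ 2 / 2 * (r * ∫ ω, T ω ^ 3 ∂μ) := by gcongr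
    _ = _ := by ring

lemma abs_integral_exp_neg_mul_min_sub_le [IsProbabilityMeasure μ] {T : Ω → ℝ}
    (hT : Measurable T) (hT0 : ∀ᵐ ω ∂μ, 0 ≤ T ω) (hT3 : Integrable (fun ω => T ω ^ 3) μ)
    {r : ℝ} (hr : 0 < r) (z : ℝ) :
    |∫ ω, Real.exp (-z * min (T ω) (1 / r)) ∂μ
        - (1 - z * ∫ ω, T ω ∂μ + z ^ 2 / 2 * ∫ ω, T ω ^ 2 ∂μ)|
      ≤ (Real.exp (|z| * (1 / r)) * |z| ^ 3 + |z| * r ^ 2 + z ^ 2 / 2 * r)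
          * ∫ ω, T ω ^ 3 ∂μ := by
  have hX0 : ∀ᵐ ω ∂μ, 0 ≤ min (T ω) (1 / r) := by
    filter_upwards [hT0] with ω hω using le_min hω (by positivity)
  have hXb : ∀ᵐ ω ∂μ, min (T ω) (1 / r) ≤ 1 / r := ae_of_all _ fun ω => min_le_right _ _
  have hX3 : ∫ ω, min (T ω) (1 / r) ^ 3 ∂μ ≤ ∫ ω, T ω ^ 3 ∂μ :=
    integral_mono_ae (integrable_pow_of_bounded (hT.min measurable_const) hX0 hXb 3) hT3 <| by
      filter_upwards [hX0] with ω hω using pow_le_pow_left₀ hω (min_le_left _ _) 3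
  calc _ ≤ _ := abs_sub_le _ _ _
    _ ≤ Real.exp (|z| * (1 / r)) * |z| ^ 3 * ∫ ω, min (T ω) (1 / r) ^ 3 ∂μ
        + (|z| * r ^ 2 + z ^ 2 / 2 * r) * ∫ ω, T ω ^ 3 ∂μ :=
      add_le_add (abs_integral_exp_neg_mul_sub_le (hT.min measurable_const) hX0 hXb z)
        (abs_quadratic_integral_min_one_div_sub_le hT hT0 hT3 hr z)
    _ ≤ Real.exp (|z| * (1 / r)) * |z| ^ 3 * ∫ ω, T ω ^ 3 ∂μ
        + (|z| * r ^ 2 + z ^ 2 / 2 * r) * ∫ ω, T ω ^ 3 ∂μ := by gcongr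
    _ = _ := by ring

lemma antitone_integral_exp_neg_mul_min [IsFiniteMeasure μ] {T : Ω → ℝ} (hT : Measurable T)
    (hT0 : ∀ᵐ ω ∂μ, 0 ≤ T ω) {r : ℝ} (hr : 0 < r) :
    Antitone fun z => ∫ ω, Real.exp (-z * min (T ω) (1 / r)) ∂μ :=
  antitone_integral_exp_neg_mul (hT.min measurable_const)
    (by filter_upwards [hT0] with ω hω using le_min hω (by positivity))
    (ae_of_all _ fun ω => min_le_right _ (1 / r))

lemma integral_sq_eq_integral_sub_sq_add_sq [IsProbabilityMeasure μ] {X : Ω → ℝ}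
    (hX : MemLp X 2 μ) :
    ∫ ω, X ω ^ 2 ∂μ = ∫ ω, (X ω - ∫ ω', X ω' ∂μ) ^ 2 ∂μ + (∫ ω, X ω ∂μ) ^ 2 := by
  have h := ProbabilityTheory.variance_eq_sub hX
  rw [ProbabilityTheory.variance_eq_integral hX.aemeasurable] at h
  simp only [Pi.pow_apply] at h
  linarith

end MeasureTheory

lemma Filter.Tendsto.isBigO_of_eq_mul {α : Type*} {l : Filter α} {f F g : α → ℝ} {L : ℝ}
    (hF : Tendsto F l (𝓝 L)) (h : ∀ᶠ a in l, f a = F a * g a) : f =O[l] g :=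
  ((hF.isBigO_one ℝ).mul (isBigO_refl g l)).congr' (h.mono fun _ ha => ha.symm)
    (Eventually.of_forall fun _ => one_mul _)

lemma isBigO_exp_mul_sub_quadratic (θ : ℝ) :
    (fun r : ℝ => Real.exp (r * θ) - (1 + r * θ + (r * θ) ^ 2 / 2)) =O[𝓝 0] fun r => r ^ 3 := by
  refine .of_bound (|θ| ^ 3 * Real.exp |θ|) ?_
  filter_upwards [Metric.closedBall_mem_nhds (0 : ℝ) one_pos] with r hr
  rw [Metric.mem_closedBall, dist_zero_right, Real.norm_eq_abs] at hr
  rw [Real.norm_eq_abs, Real.norm_eq_abs, abs_pow]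
  calc _ ≤ |r * θ| ^ 3 * Real.exp |r * θ| := Real.abs_exp_sub_quadratic_le _
    _ ≤ |r * θ| ^ 3 * Real.exp |θ| := by
      refine mul_le_mul_of_nonneg_left (Real.exp_le_exp.2 ?_) (by positivity)
      rw [abs_mul]
      exact mul_le_of_le_one_left (abs_nonneg θ) hr
    _ = _ := by rw [abs_mul]; ring

/-- The second-order approximation of `ζ⁽ʳ⁾(r θ)`. -/
noncomputable def approxRoot (m σ2 : ℝ → ℝ) (θ r : ℝ) : ℝ :=
  -(1 / m r) * r * θ + 1 / 2 * (1 / m r) ^ 3 * σ2 r * r ^ 2 * θ ^ 2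

section ApproxRoot

variable {m σ2 : ℝ → ℝ} {m₀ σ₀ : ℝ}

lemma isBigO_approxRoot_add (hm₀ : m₀ ≠ 0) (hm : Tendsto m (𝓝[>] 0) (𝓝 m₀))
    (hσ : Tendsto σ2 (𝓝[>] 0) (𝓝 σ₀)) (θ c : ℝ) :
    (fun r => approxRoot m σ2 θ r + c * r ^ 2) =O[𝓝[>] 0] fun r => r := by
  have hr : Tendsto (fun r : ℝ => r) (𝓝[>] 0) (𝓝 0) := tendsto_nhdsWithin_of_tendsto_nhds tendsto_id
  have hμ : Tendsto (fun r => 1 / m r) (𝓝[>] 0) (𝓝 (1 / m₀)) := tendsto_const_nhds.div hm hm₀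
  have ha := (((hμ.pow 3).const_mul (1 / 2)).mul hσ).mul_const (θ ^ 2) |>.add_const c
  refine ((hμ.neg.mul_const θ).add (ha.mul hr)).isBigO_of_eq_mul (.of_forall fun r => ?_)
  simp only [approxRoot]
  ring

lemma isBigO_quadratic_approxRoot_add_sub (hm₀ : m₀ ≠ 0) (hm : Tendsto m (𝓝[>] 0) (𝓝 m₀))
    (hσ : Tendsto σ2 (𝓝[>] 0) (𝓝 σ₀)) (θ c : ℝ) :
    (fun r =>
      let z := approxRoot m σ2 θ r + c * r ^ 2
      1 - z * m r + z ^ 2 / 2 * (σ2 r + m r ^ 2) - (1 + r * θ + (r * θ) ^ 2 / 2 - c * m r * r ^ 2))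
      =O[𝓝[>] 0] fun r => r ^ 3 := by
  have hr : Tendsto (fun r : ℝ => r) (𝓝[>] 0) (𝓝 0) := tendsto_nhdsWithin_of_tendsto_nhds tendsto_id
  have hμ : Tendsto (fun r => 1 / m r) (𝓝[>] 0) (𝓝 (1 / m₀)) := tendsto_const_nhds.div hm hm₀
  have ha := (((hμ.pow 3).const_mul (1 / 2)).mul hσ).mul_const (θ ^ 2) |>.add_const c
  refine (((hσ.add (hm.pow 2)).div_const 2).mul
    (((ha.pow 2).mul hr).sub (((hμ.const_mul 2).mul_const θ).mul ha))).isBigO_of_eq_mul ?_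
  filter_upwards [hm.eventually_ne hm₀] with r hmr
  simp only [approxRoot]
  field_simp
  ring

end ApproxRoot

lemma isBigO_laplace_min_sub_quadratic {Ω : Type*} [MeasurableSpace Ω] {P : ℝ → Measure Ω}
    {T : ℝ → Ω → ℝ} (hP : ∀ r ∈ Set.Ioc (0 : ℝ) 1, IsProbabilityMeasure (P r))
    (hmeas : ∀ r ∈ Set.Ioc (0 : ℝ) 1, Measurable (T r))
    (hT0 : ∀ r ∈ Set.Ioc (0 : ℝ) 1, ∀ᵐ ω ∂(P r), 0 ≤ T r ω)
    (hint3 : ∀ r ∈ Set.Ioc (0 : ℝ) 1, Integrable (fun ω => T r ω ^ 3) (P r))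
    (hbd3 : ∃ C : ℝ, ∀ r ∈ Set.Ioc (0 : ℝ) 1, ∫ ω, T r ω ^ 3 ∂(P r) ≤ C)
    {z : ℝ → ℝ} (hz : z =O[𝓝[>] 0] fun r => r) :
    (fun r => ∫ ω, Real.exp (-z r * min (T r ω) (1 / r)) ∂(P r)
        - (1 - z r * ∫ ω, T r ω ∂(P r) + z r ^ 2 / 2 * ∫ ω, T r ω ^ 2 ∂(P r)))
      =O[𝓝[>] 0] fun r => r ^ 3 := by
  obtain ⟨C, hC⟩ := hbd3
  obtain ⟨K, hK⟩ := hz.bound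
  refine .of_bound ((Real.exp K * K ^ 3 + K + K ^ 2 / 2) * C) ?_
  filter_upwards [Ioc_mem_nhdsGT one_pos, hK] with r hr hzr
  have := hP r hr
  have hr0 : 0 ≤ r := hr.1.le
  rw [Real.norm_eq_abs, Real.norm_eq_abs, abs_of_pos hr.1] at hzr
  have hK0 : 0 ≤ K := nonneg_of_mul_nonneg_left ((abs_nonneg _).trans hzr) hr.1
  have hM0 : 0 ≤ ∫ ω, T r ω ^ 3 ∂(P r) :=
    integral_nonneg_of_ae <| by filter_upwards [hT0 r hr] with ω hω using pow_nonneg hω 3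
  have hzr' : |z r| * (1 / r) ≤ K := by
    rw [mul_one_div, div_le_iff₀ hr.1]; exact hzr
  have hzr2 : z r ^ 2 ≤ (K * r) ^ 2 := by
    rw [← sq_abs]; exact pow_le_pow_left₀ (abs_nonneg _) hzr 2
  rw [Real.norm_eq_abs, Real.norm_of_nonneg (pow_nonneg hr0 3)]
  refine (abs_integral_exp_neg_mul_min_sub_le (hmeas r hr) (hT0 r hr) (hint3 r hr) hr.1 _).trans ?_
  calc _ ≤ (Real.exp K * (K * r) ^ 3 + K * r * r ^ 2 + (K * r) ^ 2 / 2 * r)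
        * ∫ ω, T r ω ^ 3 ∂(P r) := by gcongr
    _ = (Real.exp K * K ^ 3 + K + K ^ 2 / 2) * (∫ ω, T r ω ^ 3 ∂(P r)) * r ^ 3 := by ring
    _ ≤ _ := by gcongr; exact hC r hr

lemma isLittleO_laplace_min_approxRoot_add {Ω : Type*} [MeasurableSpace Ω]
    {P : ℝ → Measure Ω} {T : ℝ → Ω → ℝ} {m σ2 : ℝ → ℝ} {m₀ σ₀ : ℝ}
    (hP : ∀ r ∈ Set.Ioc (0 : ℝ) 1, IsProbabilityMeasure (P r))
    (hmeas : ∀ r ∈ Set.Ioc (0 : ℝ) 1, Measurable (T r))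
    (hT0 : ∀ r ∈ Set.Ioc (0 : ℝ) 1, ∀ᵐ ω ∂(P r), 0 ≤ T r ω)
    (hint3 : ∀ r ∈ Set.Ioc (0 : ℝ) 1, Integrable (fun ω => T r ω ^ 3) (P r))
    (hbd3 : ∃ C : ℝ, ∀ r ∈ Set.Ioc (0 : ℝ) 1, ∫ ω, T r ω ^ 3 ∂(P r) ≤ C)
    (hm : ∀ r ∈ Set.Ioc (0 : ℝ) 1, m r = ∫ ω, T r ω ∂(P r))
    (hσ2 : ∀ r ∈ Set.Ioc (0 : ℝ) 1, σ2 r = ∫ ω, (T r ω - m r) ^ 2 ∂(P r))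
    (hm₀ : m₀ ≠ 0) (hmlim : Tendsto m (𝓝[>] 0) (𝓝 m₀)) (hσlim : Tendsto σ2 (𝓝[>] 0) (𝓝 σ₀))
    (θ c : ℝ) :
    (fun r => ∫ ω, Real.exp (-(approxRoot m σ2 θ r + c * r ^ 2) * min (T r ω) (1 / r)) ∂(P r)
        - Real.exp (r * θ) + c * m r * r ^ 2) =o[𝓝[>] 0] fun r => r ^ 2 := by
  have h₁ := isBigO_laplace_min_sub_quadratic hP hmeas hT0 hint3 hbd3
    (isBigO_approxRoot_add hm₀ hmlim hσlim θ c)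
  have h₂ := isBigO_quadratic_approxRoot_add_sub hm₀ hmlim hσlim θ c
  have h₃ := (isBigO_exp_mul_sub_quadratic θ).mono (nhdsWithin_le_nhds (s := Set.Ioi 0))
  refine (((h₁.add h₂).sub h₃).trans_isLittleO ((isLittleO_pow_pow (by norm_num : 2 < 3)).mono
    nhdsWithin_le_nhds)).congr' ?_ .rfl
  filter_upwards [Ioc_mem_nhdsGT one_pos] with r hr
  have := hP r hr
  have hsecond : ∫ ω, T r ω ^ 2 ∂(P r) = σ2 r + m r ^ 2 := by
    rw [hσ2 r hr, hm r hr]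
    exact integral_sq_eq_integral_sub_sq_add_sq <|
      (memLp_two_iff_integrable_sq (hmeas r hr).aestronglyMeasurable).2 <|
        (hint3 r hr).pow_of_le (hmeas r hr) (hT0 r hr) (by norm_num)
  simp only [hsecond, ← hm r hr]
  ring

theorem stmt2_general {Ω : Type*} [MeasurableSpace Ω]
    (P : ℝ → Measure Ω) (hP : ∀ r ∈ Set.Ioc (0:ℝ) 1, IsProbabilityMeasure (P r))
    (T : ℝ → Ω → ℝ) (hmeas : ∀ r ∈ Set.Ioc (0:ℝ) 1, Measurable (T r))
    (hTpos : ∀ r ∈ Set.Ioc (0:ℝ) 1, ∀ᵐ ω ∂(P r), 0 < T r ω)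
    (hint3 : ∀ r ∈ Set.Ioc (0:ℝ) 1, Integrable (fun ω => (T r ω)^3) (P r))
    (hbd3 : ∃ C : ℝ, ∀ r ∈ Set.Ioc (0:ℝ) 1, ∫ ω, (T r ω)^3 ∂(P r) ≤ C)
    (m σ2 : ℝ → ℝ)
    (hm : ∀ r ∈ Set.Ioc (0:ℝ) 1, m r = ∫ ω, T r ω ∂(P r))
    (hσ2 : ∀ r ∈ Set.Ioc (0:ℝ) 1, σ2 r = ∫ ω, (T r ω - m r)^2 ∂(P r))
    (m0 σ0 : ℝ) (hm0 : 0 < m0)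
    (hmlim : Filter.Tendsto m (nhdsWithin 0 (Set.Ioi 0)) (nhds m0))
    (hσlim : Filter.Tendsto σ2 (nhdsWithin 0 (Set.Ioi 0)) (nhds σ0))
    (ζ : ℝ → ℝ → ℝ)
    (hζ : ∀ r ∈ Set.Ioc (0:ℝ) 1, ∀ θ : ℝ,
      Real.exp (-θ) * ∫ ω, Real.exp (-(ζ r θ) * min (T r ω) (1/r)) ∂(P r) = 1)
    (θ : ℝ) :
    Filter.Tendsto
      (fun r => (ζ r (r * θ) + (1 / m r) * r * θ
          - (1/2) * (1 / m r)^3 * σ2 r * r^2 * θ^2) / r^2)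
      (nhdsWithin 0 (Set.Ioi 0)) (nhds 0) := by
  have hT0 : ∀ r ∈ Set.Ioc (0 : ℝ) 1, ∀ᵐ ω ∂(P r), 0 ≤ T r ω :=
    fun r hr => (hTpos r hr).mono fun _ h => h.le
  have hIoc : ∀ᶠ r in 𝓝[>] (0 : ℝ), r ∈ Set.Ioc 0 1 := Ioc_mem_nhdsGT one_pos
  refine (tendsto_div_of_antitone_of_isLittleO hm0 hmlim (h := fun r => r ^ 2)
    (ψ := fun r z => ∫ ω, Real.exp (-z * min (T r ω) (1 / r)) ∂(P r))
    (y := fun r => Real.exp (r * θ)) (z₀ := approxRoot m σ2 θ) (ζ := fun r => ζ r (r * θ))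
    ?_ ?_ ?_ (isLittleO_laplace_min_approxRoot_add hP hmeas hT0 hint3 hbd3 hm hσ2 hm0.ne' hmlim
      hσlim θ)).congr fun r => by simp only [approxRoot]; ring
  · filter_upwards [self_mem_nhdsWithin] with r hr using pow_pos hr 2
  · filter_upwards [hIoc] with r hr
    have := hP r hr
    exact antitone_integral_exp_neg_mul_min (hmeas r hr) (hT0 r hr) hr.1
  · filter_upwards [hIoc] with r hr
    have := hζ r hr (r * θ)
    rwa [Real.exp_neg, inv_mul_eq_one₀ (Real.exp_pos _).ne', eq_comm] at this

theorem stmt2 {Ω : Type*} [MeasurableSpace Ω]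
    (P : ℝ → Measure Ω) (hP : ∀ r ∈ Set.Ioc (0:ℝ) 1, IsProbabilityMeasure (P r))
    (T : ℝ → Ω → ℝ) (hmeas : ∀ r ∈ Set.Ioc (0:ℝ) 1, Measurable (T r))
    (hTpos : ∀ r ∈ Set.Ioc (0:ℝ) 1, ∀ᵐ ω ∂(P r), 0 < T r ω)
    (hint3 : ∀ r ∈ Set.Ioc (0:ℝ) 1, Integrable (fun ω => (T r ω)^3) (P r))
    (hbd3 : ∃ C : ℝ, ∀ r ∈ Set.Ioc (0:ℝ) 1, ∫ ω, (T r ω)^3 ∂(P r) ≤ C)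
    (m σ2 : ℝ → ℝ)
    (hm : ∀ r ∈ Set.Ioc (0:ℝ) 1, m r = ∫ ω, T r ω ∂(P r))
    (hmpos : ∀ r ∈ Set.Ioc (0:ℝ) 1, 0 < m r)
    (hσ2 : ∀ r ∈ Set.Ioc (0:ℝ) 1, σ2 r = ∫ ω, (T r ω - m r)^2 ∂(P r))
    (m0 σ0 : ℝ) (hm0 : 0 < m0) (hσ0 : 0 < σ0)
    (hmlim : Filter.Tendsto m (nhdsWithin 0 (Set.Ioi 0)) (nhds m0))
    (hσlim : Filter.Tendsto σ2 (nhdsWithin 0 (Set.Ioi 0)) (nhds σ0))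
    (ζ : ℝ → ℝ → ℝ)
    (hζ : ∀ r ∈ Set.Ioc (0:ℝ) 1, ∀ θ : ℝ,
      Real.exp (-θ) * ∫ ω, Real.exp (-(ζ r θ) * min (T r ω) (1/r)) ∂(P r) = 1)
    (θ : ℝ) :
    Filter.Tendsto
      (fun r => (ζ r (r * θ) + (1 / m r) * r * θ
          - (1/2) * (1 / m r)^3 * σ2 r * r^2 * θ^2) / r^2)
      (nhdsWithin 0 (Set.Ioi 0)) (nhds 0) :=
  stmt2_general P hP T hmeas hTpos hint3 hbd3 m σ2 hm hσ2 m0 σ0 hm0 hmlim hσlim ζ hζ θ
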